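/- arXiv:1510.00129 — 2 statements merged into one kernel-verified Lean document; each statement's English description precedes it below -/
import Mathlib

section
/- Let G be a finite group. Then 𝒫(G) is a complete graph on at least two vertices if and only if G is cyclic of order p·q for two distinct primes p, q. -/
open SimpleGraph

/-- The coprime graph of subgroups of a group `G`: vertices are the proper nontrivial
subgroups of `G`, and two distinct vertices are adjacent iff their orders are coprime. -/
def coprimeGraph (G : Type*) [Group G] :
    SimpleGraph {H : Subgroup G // H ≠ ⊥ ∧ H ≠ ⊤} where
  Adj H K := H ≠ K ∧ Nat.Coprime (Nat.card H.1) (Nat.card K.1)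
  symm := ⟨fun _ _ h => ⟨h.1.symm, h.2.symm⟩⟩
  loopless := ⟨fun _ h => h.1 rfl⟩

/-! In a complete coprime graph two distinct vertices have coprime orders, so a vertex `H` equals
every vertex whose order is divisible by `|H|`. Applied to a subgroup of prime order inside `H`,
to the conjugates of `H`, and to `P ⊔ Q`, this shows that every vertex has prime order and is
normal, and that two distinct vertices `P`, `Q` generate `G`. Being normal with trivial
intersection, `P` and `Q` commute, so the product of their generators has order
`|P| |Q| ≥ |PQ| = |G|`. Conversely, the proper nontrivial subgroups of a group of order `pq`
have order `p` or `q`, and a cyclic group has at most one subgroup of each order. -/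

open Subgroup
open scoped Pointwise

namespace Subgroup

variable {G : Type*} [Group G]

lemma ne_bot_and_ne_top_iff_card [Finite G] {H : Subgroup G} :
    H ≠ ⊥ ∧ H ≠ ⊤ ↔ Nat.card H ≠ 1 ∧ Nat.card H ≠ Nat.card G := by
  rw [Ne, Ne, eq_bot_iff_card, ← card_eq_iff_eq_top]

lemma card_eq_or_card_eq_of_card_eq_mul [Finite G] {p q : ℕ} (hp : p.Prime) (hq : q.Prime)
    (hG : Nat.card G = p * q) {H : Subgroup G} (hH : H ≠ ⊥ ∧ H ≠ ⊤) :
    Nat.card H = p ∨ Nat.card H = q := by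
  rw [ne_bot_and_ne_top_iff_card, hG] at hH
  obtain ⟨a, b, ha, hb, hab⟩ := Nat.dvd_mul.mp (hG ▸ card_subgroup_dvd_card H)
  rcases (Nat.dvd_prime hp).mp ha with rfl | rfl <;>
    rcases (Nat.dvd_prime hq).mp hb with rfl | rfl <;> omega

lemma exists_ne_bot_ne_top_card_eq_prime [Finite G] {r : ℕ} (hr : r.Prime)
    (hdvd : r ∣ Nat.card G) (hne : r ≠ Nat.card G) :
    ∃ H : Subgroup G, (H ≠ ⊥ ∧ H ≠ ⊤) ∧ Nat.card H = r := by
  have := Fact.mk hr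
  obtain ⟨H, hH⟩ := Sylow.exists_subgroup_card_pow_prime r (n := 1) ((pow_one r).symm ▸ hdvd)
  rw [pow_one] at hH
  exact ⟨H, ne_bot_and_ne_top_iff_card.mpr ⟨hH ▸ hr.ne_one, hH ▸ hne⟩, hH⟩

lemma card_sup_le_mul (H N : Subgroup G) [N.Normal] :
    Nat.card ↥(H ⊔ N) ≤ Nat.card H * Nat.card N := by
  calc Nat.card ↥(H ⊔ N) = Nat.card ((H : Set G) * (N : Set G)) := by rw [← mul_normal]; rfl
    _ ≤ Nat.card H * Nat.card N := Set.natCard_mul_le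

theorem isCyclic_and_card_eq_mul_of_sup_eq_top [Finite G] {P Q : Subgroup G} [P.Normal]
    [Q.Normal] [IsCyclic P] [IsCyclic Q] (hcop : (Nat.card P).Coprime (Nat.card Q))
    (hPQ : P ⊔ Q = ⊤) : IsCyclic G ∧ Nat.card G = Nat.card P * Nat.card Q := by
  obtain ⟨x, hx⟩ := IsCyclic.exists_ofOrder_eq_natCard (α := P)
  obtain ⟨y, hy⟩ := IsCyclic.exists_ofOrder_eq_natCard (α := Q)
  have hxy : Commute (x : G) y :=
    commute_of_normal_of_disjoint P Q ‹_› ‹_› (disjoint_of_coprime_natCard hcop) _ _ x.2 y.2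
  have horder : orderOf ((x : G) * y) = Nat.card P * Nat.card Q := by
    rw [hxy.orderOf_mul_eq_mul_orderOf_of_coprime (by rwa [orderOf_coe, orderOf_coe, hx, hy]),
      orderOf_coe, orderOf_coe, hx, hy]
  have hcard : Nat.card G = Nat.card P * Nat.card Q := by
    refine le_antisymm ?_ (horder ▸ Nat.le_of_dvd Nat.card_pos (_root_.orderOf_dvd_natCard _))
    rw [← card_top (G := G), ← hPQ]
    exact card_sup_le_mul P Q
  exact ⟨isCyclic_of_orderOf_eq_card _ (horder.trans hcard.symm), hcard⟩

end Subgroup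

theorem IsCyclic.subgroup_eq_of_card_eq {G : Type*} [Group G] [Finite G] [IsCyclic G]
    {H K : Subgroup G} (h : Nat.card H = Nat.card K) : H = K := by
  classical
  have := Fintype.ofFinite G
  have key : ∀ L : Subgroup G,
      (L : Set G).toFinset = Finset.univ.filter (· ^ Nat.card L = 1) := fun L => by
    refine Finset.eq_of_subset_of_card_le (fun x hx => ?_) ?_
    · simpa [← orderOf_dvd_iff_pow_eq_one] using L.orderOf_dvd_natCard (by simpa using hx)
    · rw [← Nat.card_eq_card_toFinset]
      exact IsCyclic.card_pow_eq_one_le Nat.card_pos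
  exact SetLike.coe_injective (Set.toFinset_inj.mp ((key H).trans (h ▸ (key K).symm)))

namespace coprimeGraph

variable {G : Type*} [Group G]

lemma coprime_card_of_eq_top (hc : coprimeGraph G = ⊤) {H K : Subgroup G}
    (hH : H ≠ ⊥ ∧ H ≠ ⊤) (hK : K ≠ ⊥ ∧ K ≠ ⊤) (hne : H ≠ K) :
    (Nat.card H).Coprime (Nat.card K) := by
  have hadj : (coprimeGraph G).Adj ⟨H, hH⟩ ⟨K, hK⟩ := by
    rw [hc, top_adj]
    exact fun h => hne (congrArg Subtype.val h)
  exact hadj.2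

variable [Finite G]

lemma eq_of_card_dvd_of_eq_top (hc : coprimeGraph G = ⊤) {H K : Subgroup G}
    (hH : H ≠ ⊥ ∧ H ≠ ⊤) (hK : K ≠ ⊥ ∧ K ≠ ⊤) (hdvd : Nat.card H ∣ Nat.card K) : H = K := by
  by_contra hne
  exact ((one_lt_card_iff_ne_bot H).mpr hH.1).ne'
    ((coprime_card_of_eq_top hc hH hK hne).eq_one_of_dvd hdvd)

lemma card_prime_of_eq_top (hc : coprimeGraph G = ⊤) {H : Subgroup G} (hH : H ≠ ⊥ ∧ H ≠ ⊤) :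
    (Nat.card H).Prime := by
  have hr := Nat.minFac_prime ((one_lt_card_iff_ne_bot H).mpr hH.1).ne'
  have := Fact.mk hr
  obtain ⟨x, hx⟩ := exists_prime_orderOf_dvd_card' (G := H) _ (Nat.minFac_dvd _)
  have hK : Nat.card (zpowers (x : G)) = (Nat.card H).minFac := by
    rw [Nat.card_zpowers, orderOf_coe, hx]
  have hKH : zpowers (x : G) ≤ H := zpowers_le.mpr x.2
  have hKv : zpowers (x : G) ≠ ⊥ ∧ zpowers (x : G) ≠ ⊤ :=
    ⟨by rw [Ne, eq_bot_iff_card, hK]; exact hr.ne_one, fun h => hH.2 (top_le_iff.mp (h ▸ hKH))⟩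
  rw [← eq_of_card_dvd_of_eq_top hc hKv hH (card_dvd_of_le hKH), hK]
  exact hr

lemma normal_of_eq_top (hc : coprimeGraph G = ⊤) {H : Subgroup G} (hH : H ≠ ⊥ ∧ H ≠ ⊤) :
    H.Normal := by
  refine normal_iff_map_conj_eq.mpr fun g => ?_
  have hcard : Nat.card (H.map (MulAut.conj g : G →* G)) = Nat.card H :=
    card_map_of_injective (MulAut.conj g).injective
  have hv : H.map (MulAut.conj g : G →* G) ≠ ⊥ ∧ H.map (MulAut.conj g : G →* G) ≠ ⊤ := by
    rwa [ne_bot_and_ne_top_iff_card, hcard, ← ne_bot_and_ne_top_iff_card]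
  exact eq_of_card_dvd_of_eq_top hc hv hH hcard.dvd

lemma sup_eq_top_of_eq_top (hc : coprimeGraph G = ⊤) {P Q : Subgroup G}
    (hP : P ≠ ⊥ ∧ P ≠ ⊤) (hQ : Q ≠ ⊥ ∧ Q ≠ ⊤) (hne : P ≠ Q) : P ⊔ Q = ⊤ := by
  by_contra htop
  have hv : P ⊔ Q ≠ ⊥ ∧ P ⊔ Q ≠ ⊤ := ⟨fun h => hP.1 (le_bot_iff.mp (h ▸ le_sup_left)), htop⟩
  exact hne ((eq_of_card_dvd_of_eq_top hc hP hv (card_dvd_of_le le_sup_left)).trans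
    (eq_of_card_dvd_of_eq_top hc hQ hv (card_dvd_of_le le_sup_right)).symm)

theorem isCyclic_and_card_eq_mul_of_eq_top (hc : coprimeGraph G = ⊤) {P Q : Subgroup G}
    (hP : P ≠ ⊥ ∧ P ≠ ⊤) (hQ : Q ≠ ⊥ ∧ Q ≠ ⊤) (hne : P ≠ Q) :
    IsCyclic G ∧ Nat.card G = Nat.card P * Nat.card Q := by
  have := normal_of_eq_top hc hP
  have := normal_of_eq_top hc hQ
  have := Fact.mk (card_prime_of_eq_top hc hP)
  have := Fact.mk (card_prime_of_eq_top hc hQ)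
  have : IsCyclic P := isCyclic_of_prime_card rfl
  have : IsCyclic Q := isCyclic_of_prime_card rfl
  exact isCyclic_and_card_eq_mul_of_sup_eq_top (coprime_card_of_eq_top hc hP hQ hne)
    (sup_eq_top_of_eq_top hc hP hQ hne)

theorem eq_top_of_isCyclic_of_card_eq_mul [IsCyclic G] {p q : ℕ} (hp : p.Prime) (hq : q.Prime)
    (hpq : p ≠ q) (hG : Nat.card G = p * q) : coprimeGraph G = ⊤ := by
  refine eq_top_iff_forall_ne_adj.mpr fun H K hne => ⟨hne, ?_⟩
  have hcard : Nat.card H.1 ≠ Nat.card K.1 :=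
    fun h => hne (Subtype.ext (IsCyclic.subgroup_eq_of_card_eq h))
  have hcop := (Nat.coprime_primes hp hq).mpr hpq
  rcases card_eq_or_card_eq_of_card_eq_mul hp hq hG H.2 with hH | hH <;>
    rcases card_eq_or_card_eq_of_card_eq_mul hp hq hG K.2 with hK | hK <;>
    rw [hH, hK] at hcard ⊢ <;> first | exact absurd rfl hcard | exact hcop | exact hcop.symm

lemma one_lt_card_vertices_of_card_eq_mul {p q : ℕ} (hp : p.Prime) (hq : q.Prime) (hpq : p ≠ q)
    (hG : Nat.card G = p * q) : 1 < Nat.card {H : Subgroup G // H ≠ ⊥ ∧ H ≠ ⊤} := by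
  obtain ⟨P, hP, hPcard⟩ := exists_ne_bot_ne_top_card_eq_prime hp (hG ▸ dvd_mul_right p q)
    (hG ▸ (lt_mul_of_one_lt_right hp.pos hq.one_lt).ne)
  obtain ⟨Q, hQ, hQcard⟩ := exists_ne_bot_ne_top_card_eq_prime hq (hG ▸ dvd_mul_left q p)
    (hG ▸ (lt_mul_of_one_lt_left hq.pos hp.one_lt).ne)
  refine Finite.one_lt_card_iff_nontrivial.mpr ⟨⟨P, hP⟩, ⟨Q, hQ⟩, fun h => hpq ?_⟩
  rw [← hPcard, ← hQcard, Subtype.mk.inj h]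

end coprimeGraph

theorem coprimeGraph_complete_iff {G : Type*} [Group G] [Finite G] :
    ((∀ H K : {H : Subgroup G // H ≠ ⊥ ∧ H ≠ ⊤}, H ≠ K → (coprimeGraph G).Adj H K) ∧
        1 < Nat.card {H : Subgroup G // H ≠ ⊥ ∧ H ≠ ⊤}) ↔
      (IsCyclic G ∧ ∃ p q : ℕ, p.Prime ∧ q.Prime ∧ p ≠ q ∧ Nat.card G = p * q) := by
  rw [← eq_top_iff_forall_ne_adj]
  constructor
  · rintro ⟨hc, hcard⟩
    obtain ⟨⟨P, hP⟩, ⟨Q, hQ⟩, hne⟩ := (Finite.one_lt_card_iff_nontrivial.mp hcard).exists_pair_ne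
    have hPQ : P ≠ Q := fun h => hne (Subtype.ext h)
    obtain ⟨hcyc, hG⟩ := coprimeGraph.isCyclic_and_card_eq_mul_of_eq_top hc hP hQ hPQ
    have hp := coprimeGraph.card_prime_of_eq_top hc hP
    have hq := coprimeGraph.card_prime_of_eq_top hc hQ
    have hcop := coprimeGraph.coprime_card_of_eq_top hc hP hQ hPQ
    exact ⟨hcyc, _, _, hp, hq, (Nat.coprime_primes hp hq).mp hcop, hG⟩
  · rintro ⟨hcyc, p, q, hp, hq, hpq, hG⟩
    exact ⟨coprimeGraph.eq_top_of_isCyclic_of_card_eq_mul hp hq hpq hG,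
      coprimeGraph.one_lt_card_vertices_of_card_eq_mul hp hq hpq hG⟩
end

section
/- For every finite group G, the girth of the coprime graph 𝒫(G) is 3, 4 or ∞ (i.e. SimpleGraph.girth 𝒫(G) ∈ {3, 4, ⊤} as an element of ℕ∞). -/
open SimpleGraph

/-!
Every cycle of a graph starts with a walk `a - b - c - d` with `a ≠ c` and `b ≠ d`. In the
coprime graph such a walk already forces a cycle of length at most four: if one of the chords
`ac`, `bd`, `ad` is present it closes a triangle or a square; otherwise there are primes
`p ∣ |a|, |c|`, `q ∣ |b|, |d|` and `s ∣ |a|, |d|`, pairwise distinct because consecutive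
vertices have coprime orders, and subgroups of orders `p`, `q`, `s` (Cauchy) form a triangle.
-/

namespace SimpleGraph

variable {V : Type*} {G : SimpleGraph V} {a b c d : V}

lemma egirth_le_three (hab : G.Adj a b) (hbc : G.Adj b c) (hca : G.Adj c a) :
    G.egirth ≤ 3 :=
  egirth_le_length (w := .cons hab <| .cons hbc <| .cons hca .nil)
    { edges_nodup := by have := hab.ne; have := hbc.ne; have := hca.ne; aesop
      ne_nil := by simp
      support_nodup := by have := hab.ne; have := hbc.ne; have := hca.ne; aesop }

lemma egirth_le_four (hab : G.Adj a b) (hbc : G.Adj b c) (hcd : G.Adj c d) (hda : G.Adj d a)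
    (hac : a ≠ c) (hbd : b ≠ d) : G.egirth ≤ 4 :=
  egirth_le_length (w := .cons hab <| .cons hbc <| .cons hcd <| .cons hda .nil)
    { edges_nodup := by
        have := hab.ne; have := hbc.ne; have := hcd.ne; have := hda.ne; aesop
      ne_nil := by simp
      support_nodup := by
        have := hab.ne; have := hbc.ne; have := hcd.ne; have := hda.ne; aesop }

lemma Walk.IsCycle.exists_adj_adj_adj {u : V} {w : G.Walk u u} (hw : w.IsCycle) :
    ∃ a b c d, G.Adj a b ∧ G.Adj b c ∧ G.Adj c d ∧ a ≠ c ∧ b ≠ d := by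
  have := hw.three_le_length
  exact ⟨_, _, _, _, w.adj_getVert_succ (i := 0) (by omega), w.adj_getVert_succ (by omega),
    w.adj_getVert_succ (i := 2) (by omega), hw.getVert_sub_one_ne_getVert_add_one (i := 1)
    (by omega), hw.getVert_sub_one_ne_getVert_add_one (i := 2) (by omega)⟩

end SimpleGraph

section CoprimeGraph

variable {G : Type*} [Group G]

lemma coprimeGraph_adj_iff {H K : {H : Subgroup G // H ≠ ⊥ ∧ H ≠ ⊤}} :
    (coprimeGraph G).Adj H K ↔ (Nat.card H.1).Coprime (Nat.card K.1) := by
  refine ⟨And.right, fun hHK => ⟨?_, hHK⟩⟩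
  rintro rfl
  exact H.2.1 (Subgroup.card_eq_one.mp (Nat.coprime_self _ |>.mp hHK))

lemma exists_coprimeGraph_card_eq [Finite G] {p : ℕ} (hp : p.Prime) (hpG : p ∣ Nat.card G)
    (hGp : p ≠ Nat.card G) : ∃ H : {H : Subgroup G // H ≠ ⊥ ∧ H ≠ ⊤}, Nat.card H.1 = p := by
  have : Fact p.Prime := ⟨hp⟩
  obtain ⟨x, hx⟩ := exists_prime_orderOf_dvd_card' p hpG
  have hcard : Nat.card (Subgroup.zpowers x) = p := by rw [Nat.card_zpowers, hx]
  refine ⟨⟨Subgroup.zpowers x, fun h => ?_, fun h => ?_⟩, hcard⟩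
  · rw [h, Subgroup.card_bot] at hcard
    exact hp.one_lt.ne hcard
  · rw [h, Subgroup.card_top] at hcard
    exact hGp hcard.symm

lemma coprimeGraph_egirth_le_three [Finite G] {p q s : ℕ} (hp : p.Prime) (hq : q.Prime)
    (hs : s.Prime) (hpq : p ≠ q) (hqs : q ≠ s) (hsp : s ≠ p) (hpG : p ∣ Nat.card G)
    (hqG : q ∣ Nat.card G) (hsG : s ∣ Nat.card G) : (coprimeGraph G).egirth ≤ 3 := by
  have ne_card {r r' : ℕ} (hr : r.Prime) (hr' : r'.Prime) (hrr' : r ≠ r') (hr'G : r' ∣ Nat.card G) :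
      r ≠ Nat.card G := fun h => hrr' ((Nat.prime_dvd_prime_iff_eq hr' hr).mp (h ▸ hr'G)).symm
  obtain ⟨P, hP⟩ := exists_coprimeGraph_card_eq hp hpG (ne_card hp hq hpq hqG)
  obtain ⟨Q, hQ⟩ := exists_coprimeGraph_card_eq hq hqG (ne_card hq hs hqs hsG)
  obtain ⟨S, hS⟩ := exists_coprimeGraph_card_eq hs hsG (ne_card hs hp hsp hpG)
  rw [← Nat.coprime_primes hp hq, ← hP, ← hQ] at hpq
  rw [← Nat.coprime_primes hq hs, ← hQ, ← hS] at hqs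
  rw [← Nat.coprime_primes hs hp, ← hS, ← hP] at hsp
  exact egirth_le_three (coprimeGraph_adj_iff.mpr hpq) (coprimeGraph_adj_iff.mpr hqs)
    (coprimeGraph_adj_iff.mpr hsp)

lemma coprimeGraph_egirth_le_four [Finite G] {a b c d : {H : Subgroup G // H ≠ ⊥ ∧ H ≠ ⊤}}
    (hab : (coprimeGraph G).Adj a b) (hbc : (coprimeGraph G).Adj b c)
    (hcd : (coprimeGraph G).Adj c d) (hac : a ≠ c) (hbd : b ≠ d) :
    (coprimeGraph G).egirth ≤ 4 := by
  by_cases hac' : (coprimeGraph G).Adj a c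
  · exact (egirth_le_three hab hbc hac'.symm).trans (by norm_num)
  by_cases hbd' : (coprimeGraph G).Adj b d
  · exact (egirth_le_three hbc hcd hbd'.symm).trans (by norm_num)
  by_cases had : (coprimeGraph G).Adj a d
  · exact egirth_le_four hab hbc hcd had.symm hac hbd
  rw [coprimeGraph_adj_iff, Nat.Prime.not_coprime_iff_dvd] at hac' hbd' had
  rw [coprimeGraph_adj_iff] at hab hbc hcd
  obtain ⟨p, hp, hpa, hpc⟩ := hac'
  obtain ⟨q, hq, hqb, hqd⟩ := hbd'
  obtain ⟨s, hs, hsa, hsd⟩ := had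
  have dvd_card {r : ℕ} {H : {H : Subgroup G // H ≠ ⊥ ∧ H ≠ ⊤}} (h : r ∣ Nat.card H.1) :
      r ∣ Nat.card G := h.trans (Subgroup.card_subgroup_dvd_card H.1)
  have ne {m n r r' : ℕ} (hmn : m.Coprime n) (hr : r.Prime) (hrm : r ∣ m) (hr'n : r' ∣ n) :
      r ≠ r' := fun h => hr.ne_one (Nat.eq_one_of_dvd_coprimes hmn hrm (h ▸ hr'n))
  exact (coprimeGraph_egirth_le_three hp hq hs (ne hbc.symm hp hpc hqb) (ne hab.symm hq hqb hsa)
    (ne hcd.symm hs hsd hpc) (dvd_card hpa) (dvd_card hqb) (dvd_card hsa)).trans (by norm_num)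

end CoprimeGraph

theorem coprimeGraph_egirth {G : Type*} [Group G] [Finite G] :
    (coprimeGraph G).egirth = 3 ∨ (coprimeGraph G).egirth = 4 ∨
      (coprimeGraph G).egirth = ⊤ := by
  by_cases hacyc : (coprimeGraph G).IsAcyclic
  · exact Or.inr (Or.inr (egirth_eq_top.mpr hacyc))
  obtain ⟨_, w, hw, -⟩ := exists_egirth_eq_length.mpr hacyc
  obtain ⟨a, b, c, d, hab, hbc, hcd, hac, hbd⟩ := hw.exists_adj_adj_adj
  have h4 := coprimeGraph_egirth_le_four hab hbc hcd hac hbd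
  have h3 : 3 ≤ (coprimeGraph G).egirth := three_le_egirth
  obtain ⟨n, hn⟩ := ENat.ne_top_iff_exists.mp (ne_top_of_le_ne_top (by decide) h4)
  rw [← hn] at h3 h4 ⊢
  norm_cast at h3 h4 ⊢
  omega
end
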